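/- Let A ∈ K^{M×N} have s-RIP constant δ_s(A), B ∈ K^{m×n} have σ-RIP constant δ_σ(B), and C ∈ K^{p×q} have τ-RIP constant δ_τ(C). Then the threefold Kronecker product A ⊗ B ⊗ C, acting on vectors in (K^q)^{N·n} organized into N blocks of n sub-blocks of dimension q, has (s,σ,τ)-HiRIP constant (over signals with at most s nonzero blocks, each nonzero block having at most σ nonzero sub-blocks, each nonzero sub-block being τ-sparse) satisfying δ_{(s,σ,τ)}(A ⊗ B ⊗ C) ≤ (1+δ_s(A))(1+δ_σ(B))(1+δ_τ(C)) − 1. -/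
import Mathlib


/-!
Hierarchical measurement operators and the HiRIP (Theorem 1 of the paper).
`𝕜` plays the role of the field `K ∈ {ℝ, ℂ}`.
-/

open Finset
open scoped BigOperators

variable {𝕜 : Type*} [RCLike 𝕜]

/-- Squared ℓ²-norm of a vector. -/
def normSq {ι : Type*} [Fintype ι] (v : ι → 𝕜) : ℝ := ∑ j, ‖v j‖ ^ 2

/-- A vector is `k`-sparse if it has at most `k` nonzero entries. -/
def IsSparse {n : ℕ} (k : ℕ) (v : Fin n → 𝕜) : Prop := {j | v j ≠ 0}.ncard ≤ k

/-- `x = (x_1, …, x_N)` is `(s, σ)`-hierarchically sparse: at most `s` blocks are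
nonzero and each (nonzero) block `x i` has at most `σ i` nonzero entries. -/
def IsHiSparse {N : ℕ} {n : Fin N → ℕ} (s : ℕ) (σ : Fin N → ℕ)
    (x : ∀ i, Fin (n i) → 𝕜) : Prop :=
  {i | x i ≠ 0}.ncard ≤ s ∧ ∀ i, IsSparse (σ i) (x i)

/-- The `k`-RIP constant `δ_k(M)` of a matrix `M`: the smallest `δ ≥ 0` such that
`(1-δ)‖v‖² ≤ ‖Mv‖² ≤ (1+δ)‖v‖²` for all `k`-sparse `v`. -/
noncomputable def ripConst {m n : ℕ} (M : Matrix (Fin m) (Fin n) 𝕜) (k : ℕ) : ℝ :=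
  sInf {δ : ℝ | 0 ≤ δ ∧ ∀ v : Fin n → 𝕜, IsSparse k v →
    (1 - δ) * normSq v ≤ normSq (M.mulVec v) ∧ normSq (M.mulVec v) ≤ (1 + δ) * normSq v}


/-- Three-level hierarchical `(s, σ, τ)`-sparsity of `x : Fin N → Fin n → Fin q → 𝕜`:
at most `s` of the `N` blocks are nonzero, each (nonzero) block has at most `σ`
nonzero sub-blocks, and each (nonzero) sub-block has at most `τ` nonzero entries. -/
def IsHiSparse3 {N n q : ℕ} (s σ τ : ℕ) (x : Fin N → Fin n → Fin q → 𝕜) : Prop :=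
  {i | x i ≠ 0}.ncard ≤ s ∧
    ∀ i, {k | x i k ≠ 0}.ncard ≤ σ ∧ ∀ k, {r | x i k r ≠ 0}.ncard ≤ τ

/-- The `(s, σ, τ)`-HiRIP constant of a map `T` on three-level block vectors:
the smallest `δ ≥ 0` with `(1-δ)‖x‖² ≤ ‖Tx‖² ≤ (1+δ)‖x‖²` for all
`(s, σ, τ)`-hierarchically sparse `x`. -/
noncomputable def hiripConst3 {N n q : ℕ} {ι : Type*} [Fintype ι]
    (T : (Fin N → Fin n → Fin q → 𝕜) → ι → 𝕜) (s σ τ : ℕ) : ℝ :=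
  sInf {δ : ℝ | 0 ≤ δ ∧ ∀ x : Fin N → Fin n → Fin q → 𝕜, IsHiSparse3 s σ τ x →
    (1 - δ) * (∑ i, ∑ k, normSq (x i k)) ≤ normSq (T x) ∧
      normSq (T x) ≤ (1 + δ) * (∑ i, ∑ k, normSq (x i k))}

/-- The threefold Kronecker product `A ⊗ B ⊗ C` acting blockwise:
`(A ⊗ B ⊗ C)(x) = ∑ i, a_i ⊗ (∑ k, b_k ⊗ (C x_{i,k}))`, with output indexed by
`Fin M × Fin m × Fin p`. -/
def kron3 {M N m n p q : ℕ} (A : Matrix (Fin M) (Fin N) 𝕜)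
    (B : Matrix (Fin m) (Fin n) 𝕜) (C : Matrix (Fin p) (Fin q) 𝕜)
    (x : Fin N → Fin n → Fin q → 𝕜) : Fin M × Fin m × Fin p → 𝕜 :=
  fun r => ∑ i, ∑ k, A r.1 i * B r.2.1 k * C.mulVec (x i k) r.2.2

lemma normSq_nonneg {ι : Type*} [Fintype ι] (v : ι → 𝕜) : 0 ≤ normSq v :=
  Finset.sum_nonneg fun _ _ => sq_nonneg _

lemma mulVec_normSq_le {m n : ℕ} (M : Matrix (Fin m) (Fin n) 𝕜) (v : Fin n → 𝕜) :
    normSq (M.mulVec v) ≤ (∑ i, ∑ j, ‖M i j‖ ^ 2) * normSq v := by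
  rw [Finset.sum_mul]
  unfold normSq
  apply Finset.sum_le_sum
  intro i _
  have h1 : ‖M.mulVec v i‖ ≤ ∑ j, ‖M i j‖ * ‖v j‖ := by
    simp only [Matrix.mulVec, dotProduct]
    exact (norm_sum_le _ _).trans (le_of_eq (by simp [norm_mul]))
  calc ‖M.mulVec v i‖ ^ 2 ≤ (∑ j, ‖M i j‖ * ‖v j‖) ^ 2 :=
        pow_le_pow_left₀ (norm_nonneg _) h1 2
    _ ≤ (∑ j, ‖M i j‖ ^ 2) * ∑ j, ‖v j‖ ^ 2 :=
        Finset.sum_mul_sq_le_sq_mul_sq _ _ _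

lemma ripConst_spec {m n : ℕ} (M : Matrix (Fin m) (Fin n) 𝕜) (k : ℕ) :
    0 ≤ ripConst M k ∧ ∀ v : Fin n → 𝕜, IsSparse k v →
      (1 - ripConst M k) * normSq v ≤ normSq (M.mulVec v) ∧
      normSq (M.mulVec v) ≤ (1 + ripConst M k) * normSq v := by
  set S := {δ : ℝ | 0 ≤ δ ∧ ∀ v : Fin n → 𝕜, IsSparse k v →
    (1 - δ) * normSq v ≤ normSq (M.mulVec v) ∧
      normSq (M.mulVec v) ≤ (1 + δ) * normSq v} with hS
  have hbdd : BddBelow S := ⟨0, fun δ hδ => hδ.1⟩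
  have hK : (0:ℝ) ≤ ∑ i, ∑ j, ‖M i j‖ ^ 2 :=
    Finset.sum_nonneg fun _ _ => Finset.sum_nonneg fun _ _ => sq_nonneg _
  have hne : S.Nonempty := by
    refine ⟨1 + ∑ i, ∑ j, ‖M i j‖ ^ 2, by linarith, fun v _ => ⟨?_, ?_⟩⟩
    · have := normSq_nonneg (𝕜 := 𝕜) v
      have := normSq_nonneg (𝕜 := 𝕜) (M.mulVec v)
      nlinarith
    · have h := mulVec_normSq_le M v
      have := normSq_nonneg (𝕜 := 𝕜) v
      nlinarith
  have hclosed : IsClosed S := by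
    have heq : S = {δ : ℝ | 0 ≤ δ} ∩ ⋂ v ∈ {v : Fin n → 𝕜 | IsSparse k v},
        ({δ : ℝ | (1 - δ) * normSq v ≤ normSq (M.mulVec v)} ∩
         {δ : ℝ | normSq (M.mulVec v) ≤ (1 + δ) * normSq v}) := by
      ext δ
      simp only [hS, Set.mem_setOf_eq, Set.mem_inter_iff, Set.mem_iInter]
    rw [heq]
    refine (isClosed_le continuous_const continuous_id).inter
      (isClosed_biInter fun v _ => IsClosed.inter ?_ ?_)
    · exact isClosed_le (by fun_prop) continuous_const
    · exact isClosed_le continuous_const (by fun_prop)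
  have := IsClosed.csInf_mem hclosed hne hbdd
  exact this

/-- **Three-level Kronecker HiRIP.** If `A` has `s`-RIP constant `δ_s(A)`, `B` has
`σ`-RIP constant `δ_σ(B)` and `C` has `τ`-RIP constant `δ_τ(C)`, then `A ⊗ B ⊗ C`
has `(s, σ, τ)`-HiRIP constant at most
`(1 + δ_s(A)) * (1 + δ_σ(B)) * (1 + δ_τ(C)) - 1`. -/
theorem hiripConst3_kron3_le {M N m n p q : ℕ}
    (A : Matrix (Fin M) (Fin N) 𝕜) (B : Matrix (Fin m) (Fin n) 𝕜)
    (C : Matrix (Fin p) (Fin q) 𝕜) (s σ τ : ℕ) :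
    hiripConst3 (kron3 A B C) s σ τ ≤
      (1 + ripConst A s) * (1 + ripConst B σ) * (1 + ripConst C τ) - 1 := by
  obtain ⟨hA0, hAspec⟩ := ripConst_spec A s
  obtain ⟨hB0, hBspec⟩ := ripConst_spec B σ
  obtain ⟨hC0, hCspec⟩ := ripConst_spec C τ
  set δA := ripConst A s
  set δB := ripConst B σ
  set δC := ripConst C τ
  apply csInf_le ⟨0, fun δ hδ => hδ.1⟩
  refine ⟨by nlinarith [mul_nonneg hA0 hB0, mul_nonneg hB0 hC0, mul_nonneg hA0 hC0, mul_nonneg (mul_nonneg hA0 hB0) hC0], ?_⟩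
  intro x hx
  set S := ∑ i, ∑ k, normSq (x i k) with hSdef
  have hSnn : 0 ≤ S := Finset.sum_nonneg fun _ _ =>
    Finset.sum_nonneg fun _ _ => normSq_nonneg _
  set Y := ∑ i, ∑ k, normSq (C.mulVec (x i k)) with hYdef
  set W := ∑ i, ∑ r : Fin p, normSq (B.mulVec (fun k => C.mulVec (x i k) r)) with hWdef
  set T2 := normSq (kron3 A B C x) with hT2def
  -- step C bounds
  have hC1 : (1 - δC) * S ≤ Y := by
    rw [hSdef, hYdef, Finset.mul_sum]
    refine Finset.sum_le_sum fun i _ => ?_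
    rw [Finset.mul_sum]
    exact Finset.sum_le_sum fun k _ => (hCspec (x i k) ((hx.2 i).2 k)).1
  have hC2 : Y ≤ (1 + δC) * S := by
    rw [hSdef, hYdef, Finset.mul_sum]
    refine Finset.sum_le_sum fun i _ => ?_
    rw [Finset.mul_sum]
    exact Finset.sum_le_sum fun k _ => (hCspec (x i k) ((hx.2 i).2 k)).2
  -- alternative form of Y
  have hYalt : Y = ∑ i, ∑ r : Fin p, normSq (fun k => C.mulVec (x i k) r) := by
    rw [hYdef]
    refine Finset.sum_congr rfl fun i _ => ?_
    simp only [normSq]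
    exact Finset.sum_comm
  -- step B bounds
  have hBsp : ∀ (i : Fin N) (r : Fin p), IsSparse σ (fun k => C.mulVec (x i k) r) := by
    intro i r
    refine le_trans (Set.ncard_le_ncard ?_ (Set.toFinite _)) (hx.2 i).1
    intro k hk
    simp only [Set.mem_setOf_eq] at hk ⊢
    intro hxk
    exact hk (by rw [hxk, Matrix.mulVec_zero]; rfl)
  have hB1 : (1 - δB) * Y ≤ W := by
    rw [hYalt, hWdef, Finset.mul_sum]
    refine Finset.sum_le_sum fun i _ => ?_
    rw [Finset.mul_sum]
    exact Finset.sum_le_sum fun r _ => (hBspec _ (hBsp i r)).1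
  have hB2 : W ≤ (1 + δB) * Y := by
    rw [hYalt, hWdef, Finset.mul_sum]
    refine Finset.sum_le_sum fun i _ => ?_
    rw [Finset.mul_sum]
    exact Finset.sum_le_sum fun r _ => (hBspec _ (hBsp i r)).2
  -- alternative form of T2 and W
  have swap3 : ∀ (F : Fin m → Fin p → Fin N → ℝ),
      ∑ k', ∑ r, ∑ i, F k' r i = ∑ i, ∑ r, ∑ k', F k' r i := by
    intro F
    rw [Finset.sum_comm]
    rw [show ∑ r : Fin p, ∑ k' : Fin m, ∑ i, F k' r i
        = ∑ r, ∑ i, ∑ k', F k' r i from Finset.sum_congr rfl fun _ _ => Finset.sum_comm]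
    exact Finset.sum_comm
  set Wv := ∑ k' : Fin m, ∑ r : Fin p,
      normSq (fun i => B.mulVec (fun k => C.mulVec (x i k) r) k') with hWvdef
  have hWW : Wv = W := by
    rw [hWvdef, hWdef]
    simp only [normSq]
    exact swap3 _
  have hTalt : T2 = ∑ k' : Fin m, ∑ r : Fin p,
      normSq (A.mulVec (fun i => B.mulVec (fun k => C.mulVec (x i k) r) k')) := by
    rw [hT2def]
    simp only [normSq, kron3, Matrix.mulVec, dotProduct, Fintype.sum_prod_type,
      Finset.mul_sum, mul_assoc]
    rw [Finset.sum_comm]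
    exact Finset.sum_congr rfl fun k' _ => Finset.sum_comm
  -- step A bounds
  have hAsp : ∀ (k' : Fin m) (r : Fin p),
      IsSparse s (fun i => B.mulVec (fun k => C.mulVec (x i k) r) k') := by
    intro k' r
    refine le_trans (Set.ncard_le_ncard ?_ (Set.toFinite _)) hx.1
    intro i hi
    simp only [Set.mem_setOf_eq] at hi ⊢
    intro hxi
    apply hi
    have h0 : (fun k => C.mulVec (x i k) r) = 0 := by
      funext k
      rw [show x i k = 0 from congrFun hxi k, Matrix.mulVec_zero]
      rfl
    rw [h0, Matrix.mulVec_zero]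
    rfl
  have hA1 : (1 - δA) * W ≤ T2 := by
    rw [← hWW, hTalt, hWvdef, Finset.mul_sum]
    refine Finset.sum_le_sum fun k' _ => ?_
    rw [Finset.mul_sum]
    exact Finset.sum_le_sum fun r _ => (hAspec _ (hAsp k' r)).1
  have hA2 : T2 ≤ (1 + δA) * W := by
    rw [← hWW, hTalt, hWvdef, Finset.mul_sum]
    refine Finset.sum_le_sum fun k' _ => ?_
    rw [Finset.mul_sum]
    exact Finset.sum_le_sum fun r _ => (hAspec _ (hAsp k' r)).2
  -- combine
  have hYup : Y ≤ (1 + δC) * S := hC2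
  have hWup : W ≤ (1 + δB) * ((1 + δC) * S) := by
    nlinarith [mul_le_mul_of_nonneg_left hYup (by linarith : (0:ℝ) ≤ 1 + δB)]
  constructor
  · nlinarith [mul_le_mul_of_nonneg_left hWup hA0,
      mul_le_mul_of_nonneg_left hYup hB0]
  · nlinarith [mul_le_mul_of_nonneg_left hWup (by linarith : (0:ℝ) ≤ 1 + δA),
      mul_le_mul_of_nonneg_left hYup (by linarith : (0:ℝ) ≤ 1 + δB)]
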